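/- For b ∈ (0, 1/2): (i) (8/9)·A ≤ f(b)·A ≤ A, (ii) (5√3/9)·A ≤ g(b)·A ≤ A, and (iii) f(b)·A ≤ g(b)·A ≤ (5√3/8)·f(b)·A for any nonnegative real A; moreover f(b) < g(b) < 1. -/

import Mathlib

/-!
Put `x = b²`. Every claim compares `f = 2 / (2 + x)` and
`g = (2 - 3x) / (2 (1 - x)^{3/2})` with each other or with constants, all nonnegative for
`x ≤ 1/4`, so it may be squared. Squaring removes both `√(1 - x)` and `√3`, and what is left are
polynomial inequalities in `x` whose defect factors explicitly: `x² (3 - 4x)` for `g < 1`,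
`x (9x³ + 8 (2 - 5x)(1 - x))` for `f < g`, and multiples of `1 - 4x` for the two bounds
involving `√3`, which are sharp at `b = 1/2`.
-/

open Real

noncomputable def bhDensity (b : ℝ) : ℝ := 2 / (2 + b ^ 2)

noncomputable def htDensity (b : ℝ) : ℝ :=
  (2 - 3 * b ^ 2) / (2 * (1 - b ^ 2) * √(1 - b ^ 2))

lemma bhDensity_pos (b : ℝ) : 0 < bhDensity b := by
  unfold bhDensity
  positivity

lemma bhDensity_le_one (b : ℝ) : bhDensity b ≤ 1 := by
  rw [bhDensity, div_le_one (by positivity)]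
  linarith [sq_nonneg b]

lemma eight_div_nine_le_bhDensity {b : ℝ} (hb : b ^ 2 ≤ 1 / 4) : 8 / 9 ≤ bhDensity b := by
  rw [bhDensity, div_le_div_iff₀ (by norm_num) (by positivity)]
  linarith

lemma bhDensity_sq (b : ℝ) : bhDensity b ^ 2 = 4 / (2 + b ^ 2) ^ 2 := by
  rw [bhDensity, div_pow]
  norm_num

lemma htDensity_nonneg {b : ℝ} (hb : 3 * b ^ 2 ≤ 2) : 0 ≤ htDensity b := by
  have h1 : 0 ≤ 1 - b ^ 2 := by linarith [sq_nonneg b]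
  unfold htDensity
  exact div_nonneg (by linarith) (by positivity)

lemma htDensity_sq {b : ℝ} (hb : b ^ 2 ≤ 1) :
    htDensity b ^ 2 = (2 - 3 * b ^ 2) ^ 2 / (4 * (1 - b ^ 2) ^ 3) := by
  rw [htDensity, div_pow, mul_pow, mul_pow, sq_sqrt (by linarith)]
  ring

lemma htDensity_lt_one {b : ℝ} (h0 : b ≠ 0) (hb : b ^ 2 < 3 / 4) : htDensity b < 1 := by
  have h1 : 0 < 1 - b ^ 2 := by linarith
  refine lt_of_pow_lt_pow_left₀ 2 zero_le_one ?_
  rw [htDensity_sq (by linarith), one_pow, div_lt_one (by positivity)]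
  have defect : 0 < (b ^ 2) ^ 2 * (3 - 4 * b ^ 2) :=
    mul_pos (by positivity) (by linarith)
  linarith [defect]

lemma sq_five_mul_sqrt_three_div (c : ℝ) : (5 * √3 / c) ^ 2 = 75 / c ^ 2 := by
  rw [div_pow, mul_pow, sq_sqrt zero_le_three]
  norm_num

lemma five_mul_sqrt_three_div_nine_le_htDensity {b : ℝ} (hb : b ^ 2 ≤ 1 / 4) :
    5 * √3 / 9 ≤ htDensity b := by
  have h1 : 0 < 1 - b ^ 2 := by linarith
  refine le_of_pow_le_pow_left₀ two_ne_zero (htDensity_nonneg (by linarith)) ?_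
  rw [htDensity_sq (by linarith), sq_five_mul_sqrt_three_div,
    div_le_div_iff₀ (by norm_num) (by positivity)]
  have defect : 0 ≤ (1 - 4 * b ^ 2) * (8 + 8 * b ^ 2 - 25 * (b ^ 2) ^ 2) :=
    mul_nonneg (by linarith) (by nlinarith [sq_nonneg b])
  linarith [defect]

lemma bhDensity_lt_htDensity {b : ℝ} (h0 : b ≠ 0) (hb : b ^ 2 ≤ 2 / 5) :
    bhDensity b < htDensity b := by
  have h1 : 0 < 1 - b ^ 2 := by linarith
  refine lt_of_pow_lt_pow_left₀ 2 (htDensity_nonneg (by linarith)) ?_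
  rw [htDensity_sq (by linarith), bhDensity_sq,
    div_lt_div_iff₀ (by positivity) (by positivity)]
  have hx : 0 < b ^ 2 := by positivity
  have defect : 0 < b ^ 2 * (9 * (b ^ 2) ^ 3 + 8 * (2 - 5 * b ^ 2) * (1 - b ^ 2)) :=
    mul_pos hx (by nlinarith [pow_pos hx 3])
  linarith [defect]

lemma htDensity_le_five_mul_sqrt_three_div_eight_mul_bhDensity {b : ℝ} (hb : b ^ 2 ≤ 1 / 4) :
    htDensity b ≤ 5 * √3 / 8 * bhDensity b := by
  have h1 : 0 < 1 - b ^ 2 := by linarith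
  have hx : 0 ≤ b ^ 2 := sq_nonneg b
  refine le_of_pow_le_pow_left₀ two_ne_zero (mul_nonneg (by positivity) (bhDensity_pos b).le) ?_
  rw [mul_pow, htDensity_sq (by linarith), bhDensity_sq, sq_five_mul_sqrt_three_div,
    div_mul_div_comm, div_le_div_iff₀ (by positivity) (by positivity)]
  have defect : 0 ≤ (1 - 4 * b ^ 2) * (9 * (b ^ 2) ^ 3 + 45 * (b ^ 2) ^ 2 - 53 * b ^ 2 + 11) :=
    mul_nonneg (by linarith) (by nlinarith [pow_nonneg hx 3])
  linarith [defect]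

theorem area_comparison (b A : ℝ) (hb : b ∈ Set.Ioo (0 : ℝ) (1 / 2)) (hA : 0 ≤ A) :
    let f := 2 / (2 + b ^ 2)
    let g := (2 - 3 * b ^ 2) / (2 * (1 - b ^ 2) * Real.sqrt (1 - b ^ 2))
    ((8 / 9) * A ≤ f * A ∧ f * A ≤ A) ∧
    ((5 * Real.sqrt 3 / 9) * A ≤ g * A ∧ g * A ≤ A) ∧
    (f * A ≤ g * A ∧ g * A ≤ (5 * Real.sqrt 3 / 8) * (f * A)) ∧
    f < g ∧ g < 1 := by
  intro f g
  obtain ⟨hb0, hb2⟩ := hb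
  have hsq : b ^ 2 ≤ 1 / 4 := by nlinarith
  have hf_lt_g : f < g := bhDensity_lt_htDensity hb0.ne' (by linarith)
  have hg_lt_one : g < 1 := htDensity_lt_one hb0.ne' (by linarith)
  have hg_le_f : g ≤ 5 * √3 / 8 * f :=
    htDensity_le_five_mul_sqrt_three_div_eight_mul_bhDensity hsq
  refine ⟨⟨?_, ?_⟩, ⟨?_, ?_⟩, ⟨?_, ?_⟩, hf_lt_g, hg_lt_one⟩
  · exact mul_le_mul_of_nonneg_right (eight_div_nine_le_bhDensity hsq) hA
  · exact mul_le_of_le_one_left hA (bhDensity_le_one b)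
  · exact mul_le_mul_of_nonneg_right (five_mul_sqrt_three_div_nine_le_htDensity hsq) hA
  · exact mul_le_of_le_one_left hA hg_lt_one.le
  · exact mul_le_mul_of_nonneg_right hf_lt_g.le hA
  · rw [← mul_assoc]
    exact mul_le_mul_of_nonneg_right hg_le_f hA
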